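/- Fix an integer r ≥ 1 and define polynomials p_ℓ (ℓ ≥ 0) by p_0(t) = t − 1 and p_{ℓ+1}(t) = r·t²·(t−1)·p_ℓ'(t). Then: (i) p_ℓ has degree exactly 2ℓ+1 for every ℓ ≥ 0; (ii) for every ℓ ≥ 0 there exists ε > 0 such that for all z ∈ ℂ with |z| < ε, the series Σ_{m=1}^∞ ((rm)^{m+ℓ}/m!)·(z·e^{−z^r})^{rm} converges absolutely and equals p_ℓ(1/(1−r z^r)). -/

import Mathlib

/-!
Put `v = r z^r`. The `m`-th term is `r^ℓ` times the `(m+1)`-st term of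
`ξ_ℓ(w) = ∑ n^(n+ℓ) w^n / n!` at `w = v e^(-v)`, and `p_ℓ = r^ℓ q_ℓ` where `q_ℓ` is `p_ℓ` for
`r = 1`; so it suffices to show `ξ_ℓ(v e^(-v)) = q_ℓ(1/(1-v))` for small `v`.

Since `w ξ_ℓ'(w) = ξ_(ℓ+1)(w)` and `(v e^(-v))' = (1 - v) e^(-v)`, differentiating the identity for
`ℓ` in `v` gives the one for `ℓ + 1`. The base case `ξ_0(v e^(-v)) = v/(1-v)` is Lagrange
inversion made explicit: expanding every `e^(-nv)` gives an absolutely convergent double series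
whose `v^N`-coefficient is `∑_k (-1)^(N-k) (N choose k) k^N / N! = 1`, the `N`-th forward
difference of `x^N` at `0` divided by `N!`.
-/

open Finset Polynomial Filter Topology
open scoped Nat

noncomputable def pPoly (r : ℕ) : ℕ → Polynomial ℂ
  | 0 => Polynomial.X - 1
  | ℓ + 1 => (r : Polynomial ℂ) * Polynomial.X ^ 2 * (Polynomial.X - 1) *
      (Polynomial.derivative (pPoly r ℓ))

theorem pPoly_eq_C_mul (r : ℕ) : ∀ ℓ, pPoly r ℓ = C ((r : ℂ) ^ ℓ) * pPoly 1 ℓ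
  | 0 => by simp [pPoly]
  | ℓ + 1 => by
    rw [pPoly, pPoly, pPoly_eq_C_mul r ℓ, derivative_C_mul, pow_succ (r : ℂ) ℓ, C_mul,
      ← C_eq_natCast, Nat.cast_one]
    ring

theorem degree_pPoly {r : ℕ} (hr : r ≠ 0) :
    ∀ ℓ, (pPoly r ℓ).degree = ((2 * ℓ + 1 : ℕ) : WithBot ℕ)
  | 0 => by simpa [pPoly] using degree_X_sub_C (1 : ℂ)
  | ℓ + 1 => by
    have ih := degree_pPoly hr ℓ
    have hd : (derivative (pPoly r ℓ)).degree = ((2 * ℓ : ℕ) : WithBot ℕ) := by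
      rw [degree_derivative (by rw [natDegree_eq_of_degree_eq_some ih]; omega),
        natDegree_eq_of_degree_eq_some ih, Nat.add_sub_cancel]
    rw [pPoly, degree_mul, degree_mul, degree_mul, hd, ← C_eq_natCast,
      degree_C (Nat.cast_ne_zero.2 hr), degree_X_pow, ← C_1, degree_X_sub_C]
    norm_cast
    omega

theorem HasSum.sum_antidiagonal {α : Type*} [AddCommMonoid α] [TopologicalSpace α]
    [ContinuousAdd α] [T3Space α] {f : ℕ × ℕ → α} {a : α} (h : HasSum f a) :
    HasSum (fun n => ∑ p ∈ antidiagonal n, f p) a :=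
  (HasAntidiagonal.sigmaAntidiagonalEquivProd.hasSum_iff.2 h).sigma fun n => by
    simpa [sum_attach] using hasSum_fintype (fun p : antidiagonal n => f p)

theorem sum_range_neg_one_pow_mul_choose_mul_pow_self {R : Type*} [CommRing R] (n : ℕ) :
    ∑ k ∈ range (n + 1), (-1 : R) ^ (n - k) * n.choose k * (k : R) ^ n = n ! := by
  simpa [fwdDiff_iter_eq_sum_shift, zsmul_eq_mul] using
    congr_fun (fwdDiff_iter_eq_factorial (R := R) (n := n)) 0

noncomputable def xiCoeff (ℓ m : ℕ) : ℂ := ((m : ℂ) + 1) ^ (m + 1 + ℓ) / (m + 1)!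

noncomputable def xiSeries (ℓ : ℕ) (w : ℂ) : ℂ := ∑' m, xiCoeff ℓ m * w ^ (m + 1)

theorem norm_natCast_add_one (m : ℕ) : ‖(m : ℂ) + 1‖ = m + 1 := by
  exact_mod_cast Complex.norm_natCast (m + 1)

theorem norm_xiCoeff (ℓ m : ℕ) : ‖xiCoeff ℓ m‖ = ((m : ℝ) + 1) ^ (m + 1 + ℓ) / (m + 1)! := by
  rw [xiCoeff, norm_div, norm_pow, Complex.norm_natCast, norm_natCast_add_one]

theorem norm_xiCoeff_le (ℓ m : ℕ) : ‖xiCoeff ℓ m‖ ≤ ((m : ℝ) + 1) ^ ℓ * Real.exp 1 ^ (m + 1) := by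
  have h := Real.pow_div_factorial_le_exp (x := (m : ℝ) + 1) (by positivity) (m + 1)
  rw [← Real.exp_nat_mul, norm_xiCoeff, pow_add, mul_comm, mul_div_assoc]
  push_cast
  rw [mul_one]
  gcongr

theorem summable_norm_xiCoeff_mul_pow {ρ : ℝ} (hρ₀ : 0 ≤ ρ) (hρ : ρ < Real.exp (-1)) (ℓ : ℕ) :
    Summable fun m => ‖xiCoeff ℓ m‖ * ρ ^ (m + 1) := by
  have hq : ‖Real.exp 1 * ρ‖ < 1 := by
    rw [Real.norm_of_nonneg (by positivity)]
    calc Real.exp 1 * ρ < Real.exp 1 * Real.exp (-1) := by gcongr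
      _ = 1 := by rw [← Real.exp_add]; simp
  have hgeom := (summable_nat_add_iff (f := fun n : ℕ => (n : ℝ) ^ ℓ * (Real.exp 1 * ρ) ^ n) 1).2
    (summable_pow_mul_geometric_of_norm_lt_one ℓ hq)
  refine Summable.of_nonneg_of_le (fun m => by positivity) (fun m => ?_) hgeom
  calc ‖xiCoeff ℓ m‖ * ρ ^ (m + 1) ≤ ((m : ℝ) + 1) ^ ℓ * Real.exp 1 ^ (m + 1) * ρ ^ (m + 1) := by
        gcongr; exact norm_xiCoeff_le ℓ m
    _ = _ := by push_cast; ring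

theorem summable_norm_xiCoeff_mul_pow_of_norm_lt {w : ℂ} (hw : ‖w‖ < Real.exp (-1)) (ℓ : ℕ) :
    Summable fun m => ‖xiCoeff ℓ m * w ^ (m + 1)‖ := by
  simpa only [norm_mul, norm_pow] using summable_norm_xiCoeff_mul_pow (norm_nonneg w) hw ℓ

theorem xiCoeff_succ (ℓ m : ℕ) : xiCoeff (ℓ + 1) m = (m + 1) * xiCoeff ℓ m := by
  simp only [xiCoeff, ← add_assoc, pow_succ]
  ring

theorem hasDerivAt_xiSeries (ℓ : ℕ) {w : ℂ} (hw : ‖w‖ < Real.exp (-1)) :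
    HasDerivAt (xiSeries ℓ) (∑' m, xiCoeff (ℓ + 1) m * w ^ m) w := by
  obtain ⟨ρ, hwρ, hρ⟩ := exists_between hw
  have hU : w ∈ Metric.ball (0 : ℂ) ρ := mem_ball_zero_iff.2 hwρ
  have hterm : ∀ m, DifferentiableOn ℂ (fun u : ℂ => xiCoeff ℓ m * u ^ (m + 1))
      (Metric.ball 0 ρ) := fun m => by fun_prop
  have hle : ∀ m, ∀ u ∈ Metric.ball (0 : ℂ) ρ,
      ‖xiCoeff ℓ m * u ^ (m + 1)‖ ≤ ‖xiCoeff ℓ m‖ * ρ ^ (m + 1) := by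
    intro m u hu
    rw [norm_mul, norm_pow]
    gcongr
    exact (mem_ball_zero_iff.1 hu).le
  have hu := summable_norm_xiCoeff_mul_pow ((norm_nonneg w).trans hwρ.le) hρ ℓ
  have hdiff := Complex.differentiableOn_tsum_of_summable_norm hu hterm Metric.isOpen_ball hle
  have hderiv := Complex.hasSum_deriv_of_summable_norm hu hterm Metric.isOpen_ball hle hU
  have hD : HasDerivAt (xiSeries ℓ) (deriv (xiSeries ℓ) w) w :=
    (hdiff.differentiableAt (Metric.isOpen_ball.mem_nhds hU)).hasDerivAt
  refine hD.congr_deriv (hderiv.tsum_eq.symm.trans (tsum_congr fun m => ?_))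
  rw [deriv_const_mul_field, deriv_pow_field, Nat.add_sub_cancel, xiCoeff_succ]
  push_cast
  ring

theorem mul_tsum_xiCoeff_succ (ℓ : ℕ) (w : ℂ) :
    w * ∑' m, xiCoeff (ℓ + 1) m * w ^ m = xiSeries (ℓ + 1) w := by
  rw [xiSeries, ← tsum_mul_left]
  congr 1 with m
  ring

/-- The disc `‖v‖ < W(1/e)`, on which `v e^(-v)` stays in the disc of convergence of `xiSeries`. -/
def xiDomain : Set ℂ := {v | ‖v‖ * Real.exp ‖v‖ < Real.exp (-1)}

theorem isOpen_xiDomain : IsOpen xiDomain :=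
  isOpen_lt (by fun_prop) continuous_const

theorem norm_lt_one_of_mem_xiDomain {v : ℂ} (hv : v ∈ xiDomain) : ‖v‖ < 1 := by
  by_contra! h
  have h1 : Real.exp (-1) < 1 * Real.exp 1 := by
    rw [one_mul]; exact Real.exp_lt_exp.2 (by norm_num)
  have h2 : 1 * Real.exp 1 ≤ ‖v‖ * Real.exp ‖v‖ := by gcongr
  exact (h1.trans_le h2).not_gt hv

theorem one_sub_ne_zero_of_mem_xiDomain {v : ℂ} (hv : v ∈ xiDomain) : 1 - v ≠ 0 := by
  rw [sub_ne_zero]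
  rintro rfl
  simpa using norm_lt_one_of_mem_xiDomain hv

theorem norm_mul_exp_neg_le (v : ℂ) : ‖v * Complex.exp (-v)‖ ≤ ‖v‖ * Real.exp ‖v‖ := by
  rw [norm_mul, Complex.norm_exp]
  gcongr
  simpa using Complex.re_le_norm (-v)

theorem sum_antidiagonal_xiCoeff_mul_exp_coeff (n : ℕ) :
    ∑ p ∈ antidiagonal n, xiCoeff 0 p.1 * ((-((p.1 : ℂ) + 1)) ^ p.2 / p.2 !) = 1 := by
  have hfac : ((n + 1)! : ℂ) ≠ 0 := Nat.cast_ne_zero.2 (Nat.factorial_ne_zero _)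
  rw [← mul_left_inj' hfac, one_mul, sum_mul, Nat.sum_antidiagonal_eq_sum_range_succ
    (fun i j => xiCoeff 0 i * ((-((i : ℂ) + 1)) ^ j / j !) * (n + 1)!)]
  conv_rhs => rw [← sum_range_neg_one_pow_mul_choose_mul_pow_self, sum_range_succ']
  simp only [CharP.cast_eq_zero, ne_eq, add_eq_zero, one_ne_zero, and_false,
    not_false_eq_true, zero_pow, mul_zero, add_zero]
  refine sum_congr rfl fun k hk => ?_
  have hkn : k ≤ n := Nat.lt_succ_iff.1 (mem_range.1 hk)
  have hpow : ((k : ℂ) + 1) ^ (n + 1) = ((k : ℂ) + 1) ^ (k + 1) * ((k : ℂ) + 1) ^ (n - k) := by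
    rw [← pow_add]; congr 1; omega
  rw [Nat.cast_choose ℂ (Nat.succ_le_succ hkn), Nat.add_sub_add_right, xiCoeff, neg_pow]
  push_cast
  rw [hpow]
  field_simp

/-- `xiSeries 0 (v * exp (-v))` with each `exp (-(m + 1) v)` expanded in powers of `v`. -/
noncomputable def xiExpansionTerm (v : ℂ) (p : ℕ × ℕ) : ℂ :=
  xiCoeff 0 p.1 * ((-((p.1 : ℂ) + 1)) ^ p.2 / p.2 !) * v ^ (p.1 + 1 + p.2)

theorem hasSum_xiExpansionTerm_row (v : ℂ) (m : ℕ) :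
    HasSum (fun k => xiExpansionTerm v (m, k))
      (xiCoeff 0 m * (v * Complex.exp (-v)) ^ (m + 1)) := by
  have hterm : ∀ k, xiExpansionTerm v (m, k) =
      xiCoeff 0 m * v ^ (m + 1) * ((-((m : ℂ) + 1) * v) ^ k / k !) := fun k => by
    rw [xiExpansionTerm, pow_add, mul_pow]
    ring
  have hsum : xiCoeff 0 m * (v * Complex.exp (-v)) ^ (m + 1) =
      xiCoeff 0 m * v ^ (m + 1) * Complex.exp (-((m : ℂ) + 1) * v) := by
    rw [show -((m : ℂ) + 1) * v = ((m + 1 : ℕ) : ℂ) * (-v) by push_cast; ring,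
      Complex.exp_nat_mul]
    ring
  rw [hsum, Complex.exp_eq_exp_ℂ]
  simp only [hterm]
  exact (NormedSpace.expSeries_div_hasSum_exp (-((m : ℂ) + 1) * v)).mul_left
    (xiCoeff 0 m * v ^ (m + 1))

theorem hasSum_norm_xiExpansionTerm_row (v : ℂ) (m : ℕ) :
    HasSum (fun k => ‖xiExpansionTerm v (m, k)‖)
      (‖xiCoeff 0 m‖ * (‖v‖ * Real.exp ‖v‖) ^ (m + 1)) := by
  have hterm : ∀ k, ‖xiExpansionTerm v (m, k)‖ =
      ‖xiCoeff 0 m‖ * ‖v‖ ^ (m + 1) * ((((m : ℝ) + 1) * ‖v‖) ^ k / k !) := fun k => by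
    rw [xiExpansionTerm, norm_mul, norm_mul, norm_div, norm_pow, norm_pow, norm_neg,
      Complex.norm_natCast, norm_natCast_add_one, pow_add, mul_pow]
    ring
  have hsum : ‖xiCoeff 0 m‖ * (‖v‖ * Real.exp ‖v‖) ^ (m + 1) =
      ‖xiCoeff 0 m‖ * ‖v‖ ^ (m + 1) * Real.exp (((m : ℝ) + 1) * ‖v‖) := by
    rw [show ((m : ℝ) + 1) * ‖v‖ = ((m + 1 : ℕ) : ℝ) * ‖v‖ by push_cast; ring, Real.exp_nat_mul]
    ring
  rw [hsum, Real.exp_eq_exp_ℝ]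
  simp only [hterm]
  exact (NormedSpace.expSeries_div_hasSum_exp (((m : ℝ) + 1) * ‖v‖)).mul_left
    (‖xiCoeff 0 m‖ * ‖v‖ ^ (m + 1))

theorem summable_xiExpansionTerm {v : ℂ} (hv : v ∈ xiDomain) : Summable (xiExpansionTerm v) := by
  refine Summable.of_norm ((summable_prod_of_nonneg fun _ => norm_nonneg _).2
    ⟨fun m => (hasSum_norm_xiExpansionTerm_row v m).summable, ?_⟩)
  simpa only [(hasSum_norm_xiExpansionTerm_row v _).tsum_eq] using
    summable_norm_xiCoeff_mul_pow (by positivity) hv 0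

theorem sum_antidiagonal_xiExpansionTerm (v : ℂ) (n : ℕ) :
    ∑ p ∈ antidiagonal n, xiExpansionTerm v p = v ^ (n + 1) := by
  rw [← one_mul (v ^ (n + 1)), ← sum_antidiagonal_xiCoeff_mul_exp_coeff n, sum_mul]
  refine sum_congr rfl fun p hp => ?_
  rw [xiExpansionTerm, ← mem_antidiagonal.1 hp, add_right_comm]

theorem xiSeries_zero_comp {v : ℂ} (hv : v ∈ xiDomain) :
    xiSeries 0 (v * Complex.exp (-v)) = v * (1 - v)⁻¹ := by
  have hT := (summable_xiExpansionTerm hv).hasSum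
  have hrows := hT.prod_fiberwise (hasSum_xiExpansionTerm_row v)
  have hdiag := hT.sum_antidiagonal
  simp only [sum_antidiagonal_xiExpansionTerm] at hdiag
  have hgeom : HasSum (fun n => v ^ (n + 1)) (v * (1 - v)⁻¹) :=
    ((hasSum_geometric_of_norm_lt_one (norm_lt_one_of_mem_xiDomain hv)).mul_left v).congr_fun
      fun n => pow_succ' v n
  exact hrows.tsum_eq.trans (hdiag.unique hgeom)

theorem hasDerivAt_mul_exp_neg (v : ℂ) :
    HasDerivAt (fun u => u * Complex.exp (-u)) ((1 - v) * Complex.exp (-v)) v :=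
  ((hasDerivAt_id' v).mul (hasDerivAt_neg v).cexp).congr_deriv (by ring)

theorem hasDerivAt_inv_one_sub {v : ℂ} (hv : 1 - v ≠ 0) :
    HasDerivAt (fun u => (1 - u)⁻¹) ((1 - v)⁻¹ ^ 2) v :=
  (((hasDerivAt_id' v).const_sub 1).inv hv).congr_deriv (by field_simp)

theorem xiSeries_comp (ℓ : ℕ) {v : ℂ} (hv : v ∈ xiDomain) :
    xiSeries ℓ (v * Complex.exp (-v)) = (pPoly 1 ℓ).eval (1 - v)⁻¹ := by
  have h1v := one_sub_ne_zero_of_mem_xiDomain hv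
  induction ℓ generalizing v with
  | zero =>
    rw [xiSeries_zero_comp hv, pPoly]
    simp only [eval_sub, eval_X, eval_one]
    field_simp
    ring
  | succ ℓ ih =>
    set t := (1 - v)⁻¹
    set D := ∑' m, xiCoeff (ℓ + 1) m * (v * Complex.exp (-v)) ^ m
    have hL := (hasDerivAt_xiSeries ℓ ((norm_mul_exp_neg_le v).trans_lt hv)).comp v
      (hasDerivAt_mul_exp_neg v)
    have hR := ((pPoly 1 ℓ).hasDerivAt t).comp v (hasDerivAt_inv_one_sub h1v)
    have hLR : D * ((1 - v) * Complex.exp (-v)) = eval t (derivative (pPoly 1 ℓ)) * t ^ 2 :=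
      hL.unique (hR.congr_of_eventuallyEq (eventuallyEq_of_mem (isOpen_xiDomain.mem_nhds hv)
        fun u hu => ih hu (one_sub_ne_zero_of_mem_xiDomain hu)))
    have ht : t * (1 - v) = 1 := inv_mul_cancel₀ h1v
    rw [← mul_tsum_xiCoeff_succ, pPoly]
    simp only [eval_mul, eval_pow, eval_sub, eval_X, eval_one, Nat.cast_one, one_mul]
    linear_combination (v * t) * hLR -
      (v * Complex.exp (-v) * D + t ^ 2 * eval t (derivative (pPoly 1 ℓ))) * ht

theorem natCast_mul_pow_div_factorial_mul_pow_eq (r ℓ m : ℕ) (z : ℂ) :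
    ((r * (m + 1) : ℕ) : ℂ) ^ (m + 1 + ℓ) / ((m + 1)! : ℂ) *
        (z * Complex.exp (-z ^ r)) ^ (r * (m + 1)) =
      (r : ℂ) ^ ℓ * (xiCoeff ℓ m * ((r * z ^ r) * Complex.exp (-(r * z ^ r))) ^ (m + 1)) := by
  rw [xiCoeff, Nat.cast_mul, mul_pow (r : ℂ), pow_mul, mul_pow z, ← Complex.exp_nat_mul, mul_neg]
  push_cast
  ring

theorem eventually_natCast_mul_pow_mem_xiDomain {r : ℕ} (hr : r ≠ 0) :
    ∀ᶠ z in 𝓝 (0 : ℂ), (r : ℂ) * z ^ r ∈ xiDomain := by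
  have h0 : (r : ℂ) * 0 ^ r ∈ xiDomain := by
    simp [xiDomain, zero_pow hr, Real.exp_pos]
  exact (by fun_prop : Continuous fun z : ℂ => (r : ℂ) * z ^ r).continuousAt.preimage_mem_nhds
    (isOpen_xiDomain.mem_nhds h0)

/-- (i) p_ℓ has degree exactly 2ℓ+1; (ii) for every ℓ ≥ 0 there is ε > 0
such that for ‖z‖ < ε the series Σ_{m≥1} ((rm)^{m+ℓ}/m!)·(z·e^{−z^r})^{rm} converges
absolutely and equals p_ℓ(1/(1−rz^r)). -/
theorem stmt10 (r : ℕ) (hr : 1 ≤ r) :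
    (∀ ℓ : ℕ, (pPoly r ℓ).degree = ((2 * ℓ + 1 : ℕ) : WithBot ℕ)) ∧
    (∀ ℓ : ℕ, ∃ ε > (0 : ℝ), ∀ z : ℂ, ‖z‖ < ε →
      (Summable fun m : ℕ =>
        ‖((r * (m + 1) : ℕ) : ℂ) ^ (m + 1 + ℓ) / (Nat.factorial (m + 1) : ℂ) *
          (z * Complex.exp (-z ^ r)) ^ (r * (m + 1))‖) ∧
      HasSum (fun m : ℕ =>
        ((r * (m + 1) : ℕ) : ℂ) ^ (m + 1 + ℓ) / (Nat.factorial (m + 1) : ℂ) *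
          (z * Complex.exp (-z ^ r)) ^ (r * (m + 1)))
        (Polynomial.eval (1 / (1 - (r : ℂ) * z ^ r)) (pPoly r ℓ))) := by
  have hr0 : r ≠ 0 := by omega
  refine ⟨degree_pPoly hr0, fun ℓ => ?_⟩
  obtain ⟨ε, hε, hdom⟩ := Metric.eventually_nhds_iff.1 (eventually_natCast_mul_pow_mem_xiDomain hr0)
  refine ⟨ε, hε, fun z hz => ?_⟩
  have hv : (r : ℂ) * z ^ r ∈ xiDomain := hdom (by rwa [dist_zero_right])
  have hsum := summable_norm_xiCoeff_mul_pow_of_norm_lt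
    ((norm_mul_exp_neg_le _).trans_lt hv) ℓ
  simp only [natCast_mul_pow_div_factorial_mul_pow_eq, norm_mul (_ ^ ℓ)]
  refine ⟨hsum.mul_left _, ?_⟩
  rw [one_div, pPoly_eq_C_mul, eval_mul, eval_C, ← xiSeries_comp ℓ hv]
  exact hsum.of_norm.hasSum.mul_left _
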